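/- arXiv:2507.18251 — 2 statements merged into one kernel-verified Lean document; each statement's English description precedes it below -/
import Mathlib

section
/- Let k ≥ 3 be an integer, let G = (A ∪ B, E) be a bipartite graph in which every vertex has degree at most k+1, and let I_G and X_G be the associated personalized bi-valued instance and allocation. Then G contains a k-regular bipartite subgraph if and only if the allocation X_G is Pareto-dominated by some allocation of I_G. -/
open Finset
open scoped Classical

noncomputable section

/-- Additive utility of a bundle: the sum of the values of the single goods in it. -/
def util {α β : Type*} [DecidableEq β] (u : α → β → ℝ) (i : α) (S : Finset β) : ℝ :=
  ∑ g ∈ S, u i g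

/-- `X` is an allocation: a partition of the set of goods into (possibly empty) bundles,
one per agent. -/
def IsAllocation {α β : Type*} [DecidableEq β] (X : α → Finset β) : Prop :=
  (∀ g : β, ∃ i, g ∈ X i) ∧ ∀ i j : α, i ≠ j → Disjoint (X i) (X j)

/-- `X'` Pareto-dominates `X` w.r.t. utilities `u`. -/
def ParetoDominates {α β : Type*} [DecidableEq β] (u : α → β → ℝ)
    (X' X : α → Finset β) : Prop :=
  (∀ i, util u i (X i) ≤ util u i (X' i)) ∧ ∃ j, util u j (X j) < util u j (X' j)

variable {A B : Type*} [Fintype A] [Fintype B] [DecidableEq A] [DecidableEq B]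

/-- The goods of the instance `I_G`: one good `g_e` for each edge `e ∈ E` of the bipartite
graph, plus `k+1` filler goods for each vertex `b ∈ B`. -/
abbrev RedGood (E : Finset (A × B)) (k : ℕ) : Type _ :=
  {e : A × B // e ∈ E} ⊕ (B × Fin (k + 1))

/-- The utilities of the instance `I_G`: agent `a ∈ A` values `g_e` at `1 + 1/k` if `a` is
an endpoint of `e` and at `1` otherwise, and values every filler good at `1`; agent `b ∈ B`
values `g_e` at `1 + (1+ε)/k` if `b` is an endpoint of `e` and at `1` otherwise, and values
every filler good at `1`. -/
def redUtil (E : Finset (A × B)) (k : ℕ) (ε : ℝ) : (A ⊕ B) → RedGood E k → ℝ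
  | Sum.inl a, Sum.inl e => if e.val.1 = a then 1 + 1 / (k : ℝ) else 1
  | Sum.inl _, Sum.inr _ => 1
  | Sum.inr b, Sum.inl e => if e.val.2 = b then 1 + (1 + ε) / (k : ℝ) else 1
  | Sum.inr _, Sum.inr _ => 1

/-- The allocation `X_G`: each agent `a ∈ A` gets the goods `g_e` for the edges `e`
incident to `a`, and each agent `b ∈ B` gets its own `k+1` filler goods. -/
def XG (E : Finset (A × B)) (k : ℕ) : (A ⊕ B) → Finset (RedGood E k)
  | Sum.inl a =>
      Finset.univ.filter (fun g => ∃ e : {e : A × B // e ∈ E}, g = Sum.inl e ∧ e.val.1 = a)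
  | Sum.inr b =>
      Finset.univ.filter (fun g => ∃ p : B × Fin (k + 1), g = Sum.inr p ∧ p.1 = b)

/-- `G = (A ∪ B, E)` contains a `k`-regular bipartite subgraph: a nonempty edge set
`E₁ ⊆ E` such that every vertex incident to an edge of `E₁` is incident to exactly `k`
edges of `E₁`. -/
def HasKRegularSubgraph (E : Finset (A × B)) (k : ℕ) : Prop :=
  ∃ E₁ : Finset (A × B), E₁ ⊆ E ∧ E₁.Nonempty ∧
    (∀ a : A, (E₁.filter (fun e => e.1 = a)).Nonempty →
      (E₁.filter (fun e => e.1 = a)).card = k) ∧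
    (∀ b : B, (E₁.filter (fun e => e.2 = b)).Nonempty →
      (E₁.filter (fun e => e.2 = b)).card = k)

section AuxProof
set_option linter.unusedSectionVars false
set_option maxHeartbeats 1000000


def incA (E : Finset (A × B)) (k : ℕ) (a : A) (g : RedGood E k) : Prop :=
  ∃ e : {e : A × B // e ∈ E}, g = Sum.inl e ∧ e.val.1 = a
def incB (E : Finset (A × B)) (k : ℕ) (b : B) (g : RedGood E k) : Prop :=
  ∃ e : {e : A × B // e ∈ E}, g = Sum.inl e ∧ e.val.2 = b

lemma card_filter_attach {γ : Type*} (s : Finset γ) (p : γ → Prop) [DecidablePred p] :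
    (s.attach.filter (fun x => p x.1)).card = (s.filter p).card := by
  apply Finset.card_bij (fun x _ => x.1)
  · intro a ha
    simp only [mem_filter, mem_attach, true_and] at ha
    simp [a.2, ha]
  · intro a₁ _ a₂ _ h; exact Subtype.ext h
  · intro b hb
    simp only [mem_filter] at hb
    exact ⟨⟨b, hb.1⟩, by simp [hb.2], rfl⟩

def edgesOfA (E : Finset (A × B)) (k : ℕ) (a : A) : Finset (RedGood E k) :=
  (E.attach.filter (fun e => e.val.1 = a)).map ⟨Sum.inl, Sum.inl_injective⟩

def fillersOf (E : Finset (A × B)) (k : ℕ) (b : B) : Finset (RedGood E k) :=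
  (({b} : Finset B) ×ˢ (univ : Finset (Fin (k + 1)))).map ⟨Sum.inr, Sum.inr_injective⟩

lemma mem_edgesOfA {E : Finset (A × B)} {k : ℕ} {a : A} {g : RedGood E k} :
    g ∈ edgesOfA E k a ↔ incA E k a g := by
  simp only [edgesOfA, Finset.mem_map, Finset.mem_filter, mem_attach, true_and,
    Function.Embedding.coeFn_mk, incA]
  constructor
  · rintro ⟨e, he, rfl⟩; exact ⟨e, rfl, he⟩
  · rintro ⟨e, rfl, he⟩; exact ⟨e, he, rfl⟩

lemma mem_fillersOf {E : Finset (A × B)} {k : ℕ} {b : B} {g : RedGood E k} :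
    g ∈ fillersOf E k b ↔ ∃ p : B × Fin (k + 1), g = Sum.inr p ∧ p.1 = b := by
  simp only [fillersOf, Finset.mem_map, Finset.mem_product, Finset.mem_singleton,
    Function.Embedding.coeFn_mk, Finset.mem_univ, and_true]
  constructor
  · rintro ⟨p, hp, rfl⟩; exact ⟨p, rfl, hp⟩
  · rintro ⟨p, rfl, hp⟩; exact ⟨p, hp, rfl⟩

lemma card_edgesOfA (E : Finset (A × B)) (k : ℕ) (a : A) :
    (edgesOfA E k a).card = (E.filter (fun e => e.1 = a)).card := by
  rw [edgesOfA, Finset.card_map]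
  exact card_filter_attach E (fun e => e.1 = a)

lemma card_fillersOf (E : Finset (A × B)) (k : ℕ) (b : B) :
    (fillersOf E k b).card = k + 1 := by
  rw [fillersOf, Finset.card_map, Finset.card_product]
  simp

lemma XG_inl (E : Finset (A × B)) (k : ℕ) (a : A) :
    XG E k (Sum.inl a) = edgesOfA E k a := by
  ext g; rw [mem_edgesOfA]; simp [XG, incA]

lemma XG_inr (E : Finset (A × B)) (k : ℕ) (b : B) :
    XG E k (Sum.inr b) = fillersOf E k b := by
  ext g; rw [mem_fillersOf]; simp [XG]

lemma filter_incA_edgesOfA (E : Finset (A × B)) (k : ℕ) (a : A) :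
    (edgesOfA E k a).filter (incA E k a) = edgesOfA E k a :=
  Finset.filter_true_of_mem (fun g hg => mem_edgesOfA.mp hg)

lemma filter_incB_fillersOf (E : Finset (A × B)) (k : ℕ) (b b' : B) :
    (fillersOf E k b).filter (incB E k b') = ∅ := by
  ext g
  simp only [mem_filter, Finset.notMem_empty, iff_false]
  rintro ⟨hg, e, rfl, -⟩
  obtain ⟨p, hp, -⟩ := mem_fillersOf.mp hg
  exact absurd hp (by simp)

lemma redUtil_inl_eq (E : Finset (A × B)) (k : ℕ) (ε : ℝ) (a : A) (g : RedGood E k) :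
    redUtil E k ε (Sum.inl a) g = 1 + (if incA E k a g then 1 / (k : ℝ) else 0) := by
  cases g with
  | inl e =>
      simp only [redUtil, incA]
      by_cases h : e.val.1 = a <;> simp [h]
  | inr p => simp [redUtil, incA]

lemma redUtil_inr_eq (E : Finset (A × B)) (k : ℕ) (ε : ℝ) (b : B) (g : RedGood E k) :
    redUtil E k ε (Sum.inr b) g = 1 + (if incB E k b g then (1 + ε) / (k : ℝ) else 0) := by
  cases g with
  | inl e =>
      simp only [redUtil, incB]
      by_cases h : e.val.2 = b <;> simp [h]
  | inr p => simp [redUtil, incB]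

lemma util_inl (E : Finset (A × B)) (k : ℕ) (ε : ℝ) (a : A) (S : Finset (RedGood E k)) :
    util (redUtil E k ε) (Sum.inl a) S
      = (S.card : ℝ) + ((S.filter (incA E k a)).card : ℝ) * (1 / (k : ℝ)) := by
  unfold util
  rw [Finset.sum_congr rfl (fun g _ => redUtil_inl_eq E k ε a g), Finset.sum_add_distrib]
  rw [← Finset.sum_filter, Finset.sum_const, Finset.sum_const]
  simp [mul_comm]

lemma util_inr (E : Finset (A × B)) (k : ℕ) (ε : ℝ) (b : B) (S : Finset (RedGood E k)) :
    util (redUtil E k ε) (Sum.inr b) S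
      = (S.card : ℝ) + ((S.filter (incB E k b)).card : ℝ) * ((1 + ε) / (k : ℝ)) := by
  unfold util
  rw [Finset.sum_congr rfl (fun g _ => redUtil_inr_eq E k ε b g), Finset.sum_add_distrib]
  rw [← Finset.sum_filter, Finset.sum_const, Finset.sum_const]
  simp [mul_comm]

lemma util_XG_inl (E : Finset (A × B)) (k : ℕ) (ε : ℝ) (a : A) :
    util (redUtil E k ε) (Sum.inl a) (XG E k (Sum.inl a))
      = ((E.filter (fun e => e.1 = a)).card : ℝ) * (1 + 1 / (k : ℝ)) := by
  rw [util_inl, XG_inl, filter_incA_edgesOfA, card_edgesOfA]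
  ring

lemma util_XG_inr (E : Finset (A × B)) (k : ℕ) (ε : ℝ) (b : B) :
    util (redUtil E k ε) (Sum.inr b) (XG E k (Sum.inr b)) = (k : ℝ) + 1 := by
  rw [util_inr, XG_inr, filter_incB_fillersOf, card_fillersOf]
  simp


def edgesOfB (E : Finset (A × B)) (k : ℕ) (b : B) : Finset (RedGood E k) :=
  (E.attach.filter (fun e => e.val.2 = b)).map ⟨Sum.inl, Sum.inl_injective⟩

lemma mem_edgesOfB {E : Finset (A × B)} {k : ℕ} {b : B} {g : RedGood E k} :
    g ∈ edgesOfB E k b ↔ incB E k b g := by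
  simp only [edgesOfB, Finset.mem_map, Finset.mem_filter, mem_attach, true_and,
    Function.Embedding.coeFn_mk, incB]
  constructor
  · rintro ⟨e, he, rfl⟩; exact ⟨e, rfl, he⟩
  · rintro ⟨e, rfl, he⟩; exact ⟨e, he, rfl⟩

lemma card_edgesOfB (E : Finset (A × B)) (k : ℕ) (b : B) :
    (edgesOfB E k b).card = (E.filter (fun e => e.2 = b)).card := by
  rw [edgesOfB, Finset.card_map]
  exact card_filter_attach E (fun e => e.2 = b)

def edgeGoods (E : Finset (A × B)) (k : ℕ) : Finset (RedGood E k) :=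
  E.attach.map ⟨Sum.inl, Sum.inl_injective⟩

lemma mem_edgeGoods {E : Finset (A × B)} {k : ℕ} {g : RedGood E k} :
    g ∈ edgeGoods E k ↔ ∃ e : {e : A × B // e ∈ E}, g = Sum.inl e := by
  simp only [edgeGoods, Finset.mem_map, mem_attach, true_and, Function.Embedding.coeFn_mk]
  constructor
  · rintro ⟨e, rfl⟩; exact ⟨e, rfl⟩
  · rintro ⟨e, rfl⟩; exact ⟨e, rfl⟩

lemma card_edgeGoods (E : Finset (A × B)) (k : ℕ) :
    (edgeGoods E k).card = E.card := by
  rw [edgeGoods, Finset.card_map, Finset.card_attach]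

lemma sum_card_inter {α β : Type*} [Fintype α] [DecidableEq β] (X : α → Finset β)
    (h : IsAllocation X) (S : Finset β) :
    ∑ i, ((X i) ∩ S).card = S.card := by
  rw [← Finset.card_biUnion]
  · congr 1
    ext g
    simp only [Finset.mem_biUnion, Finset.mem_univ, true_and, Finset.mem_inter]
    constructor
    · rintro ⟨i, -, hg⟩; exact hg
    · intro hg
      obtain ⟨i, hi⟩ := h.1 g
      exact ⟨i, ⟨hi, hg⟩⟩
  · intro i _ j _ hij
    exact Finset.disjoint_of_subset_left (Finset.inter_subset_left)
      (Finset.disjoint_of_subset_right (Finset.inter_subset_left) (h.2 i j hij))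

lemma card_univ_goods (E : Finset (A × B)) (k : ℕ) :
    (univ : Finset (RedGood E k)).card = E.card + (k + 1) * Fintype.card B := by
  rw [Finset.card_univ]
  simp only [Fintype.card_sum, Fintype.card_coe, Fintype.card_prod, Fintype.card_fin]
  ring

lemma sum_dA (E : Finset (A × B)) :
    ∑ a : A, (E.filter (fun e => e.1 = a)).card = E.card :=
  (Finset.card_eq_sum_card_fiberwise (f := Prod.fst) (t := univ) (fun e _ => mem_univ _)).symm

/- ### forward direction -/

lemma forward_dir (k : ℕ) (hk : 3 ≤ k) (E : Finset (A × B)) (ε : ℝ) (hε0 : 0 < ε)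
    (h : HasKRegularSubgraph E k) :
    ∃ X' : (A ⊕ B) → Finset (RedGood E k),
      IsAllocation X' ∧ ParetoDominates (redUtil E k ε) X' (XG E k) := by
  obtain ⟨E₁, hsub, hne, hA, hB⟩ := h
  have hk0 : (k : ℝ) ≠ 0 := by positivity
  set A₁ : Finset A := E₁.image Prod.fst with hA₁
  set B₁ : Finset B := E₁.image Prod.snd with hB₁
  have hfibA : ∀ a ∈ A₁, (E₁.filter (fun e => e.1 = a)).card = k := by
    intro a ha
    obtain ⟨e, he, rfl⟩ := Finset.mem_image.mp ha
    exact hA _ ⟨e, Finset.mem_filter.mpr ⟨he, rfl⟩⟩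
  have hfibB : ∀ b ∈ B₁, (E₁.filter (fun e => e.2 = b)).card = k := by
    intro b hb
    obtain ⟨e, he, rfl⟩ := Finset.mem_image.mp hb
    exact hB _ ⟨e, Finset.mem_filter.mpr ⟨he, rfl⟩⟩
  have hcardA : E₁.card = A₁.card * k := by
    rw [Finset.card_eq_sum_card_fiberwise (fun e he => Finset.mem_image_of_mem Prod.fst he)]
    rw [Finset.sum_congr rfl hfibA, Finset.sum_const, smul_eq_mul]
  have hcardB : E₁.card = B₁.card * k := by
    rw [Finset.card_eq_sum_card_fiberwise (fun e he => Finset.mem_image_of_mem Prod.snd he)]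
    rw [Finset.sum_congr rfl hfibB, Finset.sum_const, smul_eq_mul]
  have hcard : A₁.card = B₁.card :=
    Nat.eq_of_mul_eq_mul_right (by omega) (hcardA ▸ hcardB)
  set eqv := Finset.equivOfCardEq hcard with heqv
  set f : A → B := fun a => if h : a ∈ A₁ then (eqv ⟨a, h⟩ : {x // x ∈ B₁}).1 else hne.choose.2
    with hf
  have hf_mem : ∀ a ∈ A₁, f a ∈ B₁ := by
    intro a ha; simp only [hf, dif_pos ha]; exact (eqv ⟨a, ha⟩).2
  have hf_inj : ∀ a₁ ∈ A₁, ∀ a₂ ∈ A₁, f a₁ = f a₂ → a₁ = a₂ := by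
    intro a₁ h₁ a₂ h₂ hfa
    simp only [hf, dif_pos h₁, dif_pos h₂] at hfa
    have := eqv.injective (Subtype.ext hfa)
    exact congrArg Subtype.val this
  have hf_surj : ∀ b ∈ B₁, ∃ a, ∃ ha : a ∈ A₁, f a = b := by
    intro b hb
    refine ⟨(eqv.symm ⟨b, hb⟩).1, (eqv.symm ⟨b, hb⟩).2, ?_⟩
    simp only [hf, dif_pos (eqv.symm ⟨b, hb⟩).2]
    rw [Subtype.coe_eta, Equiv.apply_symm_apply]
  -- the improved allocation
  set L : A → Finset (RedGood E k) := fun a =>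
    (E.attach.filter (fun e => e.val.1 = a ∧ e.val ∉ E₁)).map ⟨Sum.inl, Sum.inl_injective⟩
    with hL
  set R : A → Finset (RedGood E k) := fun a => if a ∈ A₁ then fillersOf E k (f a) else ∅
    with hR
  set M : B → Finset (RedGood E k) := fun b =>
    (E.attach.filter (fun e => e.val.2 = b ∧ e.val ∈ E₁)).map ⟨Sum.inl, Sum.inl_injective⟩
    with hM
  set X' : (A ⊕ B) → Finset (RedGood E k) := Sum.elim
    (fun a => L a ∪ R a)
    (fun b => if b ∈ B₁ then M b else fillersOf E k b) with hX'
  -- membership characterizations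
  have hLmem : ∀ (a : A) (g : RedGood E k), g ∈ L a ↔
      ∃ e : {e : A × B // e ∈ E}, g = Sum.inl e ∧ e.val.1 = a ∧ e.val ∉ E₁ := by
    intro a g
    simp only [hL, Finset.mem_map, Finset.mem_filter, mem_attach, true_and,
      Function.Embedding.coeFn_mk]
    constructor
    · rintro ⟨e, he, rfl⟩; exact ⟨e, rfl, he⟩
    · rintro ⟨e, rfl, he⟩; exact ⟨e, he, rfl⟩
  have hRmem : ∀ (a : A) (g : RedGood E k), g ∈ R a ↔
      (a ∈ A₁ ∧ ∃ p : B × Fin (k + 1), g = Sum.inr p ∧ p.1 = f a) := by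
    intro a g
    simp only [hR]
    rcases em (a ∈ A₁) with ha | ha
    · rw [if_pos ha, mem_fillersOf]
      simp only [ha, true_and]
    · rw [if_neg ha]
      simp only [Finset.notMem_empty, false_iff]
      rintro ⟨h, -⟩; exact ha h
  have hMmem : ∀ (b : B) (g : RedGood E k), g ∈ M b ↔
      ∃ e : {e : A × B // e ∈ E}, g = Sum.inl e ∧ e.val.2 = b ∧ e.val ∈ E₁ := by
    intro b g
    simp only [hM, Finset.mem_map, Finset.mem_filter, mem_attach, true_and,
      Function.Embedding.coeFn_mk]
    constructor
    · rintro ⟨e, he, rfl⟩; exact ⟨e, rfl, he⟩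
    · rintro ⟨e, rfl, he⟩; exact ⟨e, he, rfl⟩
  have hX'l : ∀ a : A, X' (Sum.inl a) = L a ∪ R a := fun a => rfl
  have hX'rpos : ∀ b ∈ B₁, X' (Sum.inr b) = M b := by
    intro b hb; simp only [hX', Sum.elim_inr, if_pos hb]
  have hX'rneg : ∀ b ∉ B₁, X' (Sum.inr b) = fillersOf E k b := by
    intro b hb; simp only [hX', Sum.elim_inr, if_neg hb]
  have hmemLa : ∀ (a : A) (e : {e : A × B // e ∈ E}),
      (Sum.inl e : RedGood E k) ∈ X' (Sum.inl a) ↔ e.val.1 = a ∧ e.val ∉ E₁ := by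
    intro a e
    rw [hX'l, Finset.mem_union, hLmem, hRmem]
    constructor
    · rintro (⟨e', heq, h⟩ | ⟨-, p, heq, -⟩)
      · cases Sum.inl_injective heq; exact h
      · exact absurd heq (by simp)
    · intro h; exact Or.inl ⟨e, rfl, h⟩
  have hmemLp : ∀ (a : A) (p : B × Fin (k + 1)),
      (Sum.inr p : RedGood E k) ∈ X' (Sum.inl a) ↔ a ∈ A₁ ∧ p.1 = f a := by
    intro a p
    rw [hX'l, Finset.mem_union, hLmem, hRmem]
    constructor
    · rintro (⟨e', heq, -⟩ | ⟨ha, p', heq, hp⟩)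
      · exact absurd heq (by simp)
      · cases Sum.inr_injective heq; exact ⟨ha, hp⟩
    · rintro ⟨ha, hp⟩; exact Or.inr ⟨ha, p, rfl, hp⟩
  have hmemRa : ∀ (b : B) (e : {e : A × B // e ∈ E}),
      (Sum.inl e : RedGood E k) ∈ X' (Sum.inr b) ↔ e.val.2 = b ∧ e.val ∈ E₁ := by
    intro b e
    rcases em (b ∈ B₁) with hb | hb
    · rw [hX'rpos b hb, hMmem]
      constructor
      · rintro ⟨e', heq, h2, h3⟩; cases Sum.inl_injective heq; exact ⟨h2, h3⟩
      · rintro ⟨h2, h3⟩; exact ⟨e, rfl, h2, h3⟩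
    · rw [hX'rneg b hb, mem_fillersOf]
      constructor
      · rintro ⟨p, hp, -⟩; exact absurd hp (by simp)
      · rintro ⟨rfl, he₁⟩
        exact absurd (Finset.mem_image_of_mem Prod.snd he₁) hb
  have hmemRp : ∀ (b : B) (p : B × Fin (k + 1)),
      (Sum.inr p : RedGood E k) ∈ X' (Sum.inr b) ↔ p.1 = b ∧ b ∉ B₁ := by
    intro b p
    rcases em (b ∈ B₁) with hb | hb
    · rw [hX'rpos b hb, hMmem]
      constructor
      · rintro ⟨e, heq, -⟩; exact absurd heq (by simp)
      · rintro ⟨-, h⟩; exact absurd hb h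
    · rw [hX'rneg b hb, mem_fillersOf]
      constructor
      · rintro ⟨q, hq, hq1⟩; cases Sum.inr_injective hq; exact ⟨hq1, hb⟩
      · rintro ⟨hp, -⟩; exact ⟨p, rfl, hp⟩
  -- utility computations
  have hUa : ∀ a : A, util (redUtil E k ε) (Sum.inl a) (XG E k (Sum.inl a))
      = util (redUtil E k ε) (Sum.inl a) (X' (Sum.inl a)) := by
    intro a
    have hdisjLR : Disjoint (L a) (R a) := by
      rw [Finset.disjoint_left]
      intro g hgL hgR
      obtain ⟨e, rfl, -, -⟩ := (hLmem a g).mp hgL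
      obtain ⟨-, p, heq, -⟩ := (hRmem a _).mp hgR
      exact absurd heq (by simp)
    have hcardL : (L a).card = (E.filter (fun e => e.1 = a ∧ e ∉ E₁)).card := by
      rw [hL, Finset.card_map]
      exact card_filter_attach E (fun e => e.1 = a ∧ e ∉ E₁)
    have hfiltL : (L a ∪ R a).filter (incA E k a) = L a := by
      ext g
      rw [Finset.mem_filter, Finset.mem_union]
      constructor
      · rintro ⟨hg | hg, hinc⟩
        · exact hg
        · obtain ⟨-, p, rfl, -⟩ := (hRmem a g).mp hg
          obtain ⟨e, heq, -⟩ := hinc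
          exact absurd heq (by simp)
      · intro hg
        obtain ⟨e, heq, he1, -⟩ := (hLmem a g).mp hg
        exact ⟨Or.inl hg, e, heq, he1⟩
    rw [util_XG_inl, util_inl, hX'l, hfiltL, Finset.card_union_of_disjoint hdisjLR, hcardL]
    rcases em (a ∈ A₁) with ha | ha
    · have hcardR : (R a).card = k + 1 := by
        simp only [hR, if_pos ha]; exact card_fillersOf E k (f a)
      have hsplit : (E.filter (fun e => e.1 = a ∧ e ∉ E₁)).card + k
          = (E.filter (fun e => e.1 = a)).card := by
        have h1 : (E.filter (fun e => e.1 = a)).filter (fun e => e ∈ E₁)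
            = E₁.filter (fun e => e.1 = a) := by
          ext e
          simp only [Finset.mem_filter]
          constructor
          · rintro ⟨⟨-, h2⟩, h3⟩; exact ⟨h3, h2⟩
          · rintro ⟨h1, h2⟩; exact ⟨⟨hsub h1, h2⟩, h1⟩
        have h2 : (E.filter (fun e => e.1 = a)).filter (fun e => ¬ e ∈ E₁)
            = E.filter (fun e => e.1 = a ∧ e ∉ E₁) := by
          rw [Finset.filter_filter]
        have h3 := Finset.card_filter_add_card_filter_not
          (s := E.filter (fun e => e.1 = a)) (fun e => e ∈ E₁)
        rw [h1, h2, hfibA a ha] at h3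
        omega
      have hcast : ((E.filter (fun e => e.1 = a ∧ e ∉ E₁)).card : ℝ)
          = ((E.filter (fun e => e.1 = a)).card : ℝ) - k := by
        have := congrArg (fun n : ℕ => (n : ℝ)) hsplit
        push_cast at this
        linarith
      rw [hcardR, hcast]
      have h1k : ((E.filter (fun e => e.1 = a)).card : ℝ) * (1 / k) - (k : ℝ) * (1 / k)
          = ((E.filter (fun e => e.1 = a)).card : ℝ) * (1 / k) - 1 := by
        field_simp
      push_cast
      ring_nf
      ring_nf at h1k
      linarith [h1k]
    · have hcardR : (R a).card = 0 := by simp only [hR, if_neg ha]; simp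
      have heq : E.filter (fun e => e.1 = a ∧ e ∉ E₁) = E.filter (fun e => e.1 = a) := by
        apply Finset.filter_congr
        intro e _
        constructor
        · rintro ⟨h1, -⟩; exact h1
        · intro h1
          refine ⟨h1, fun h2 => ha ?_⟩
          rw [← h1]
          exact Finset.mem_image_of_mem Prod.fst h2
      rw [hcardR, heq]
      push_cast
      ring
  have hUbs : ∀ b ∈ B₁, util (redUtil E k ε) (Sum.inr b) (X' (Sum.inr b))
      = (k : ℝ) + 1 + ε := by
    intro b hb
    have hcardM : (M b).card = k := by
      rw [hM, Finset.card_map]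
      rw [card_filter_attach E (fun e => e.2 = b ∧ e ∈ E₁)]
      have h1 : E.filter (fun e => e.2 = b ∧ e ∈ E₁) = E₁.filter (fun e => e.2 = b) := by
        ext e
        simp only [Finset.mem_filter]
        constructor
        · rintro ⟨-, h2, h3⟩; exact ⟨h3, h2⟩
        · rintro ⟨h1, h2⟩; exact ⟨hsub h1, h2, h1⟩
      rw [h1]
      exact hfibB b hb
    have hfiltM : (M b).filter (incB E k b) = M b := by
      apply Finset.filter_true_of_mem
      intro g hg
      obtain ⟨e, rfl, he2, -⟩ := (hMmem b g).mp hg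
      exact ⟨e, rfl, he2⟩
    rw [hX'rpos b hb, util_inr, hfiltM, hcardM]
    have hx : (k : ℝ) * ((1 + ε) / k) = 1 + ε := by field_simp
    linarith [hx]
  have hUb : ∀ b : B, b ∉ B₁ → util (redUtil E k ε) (Sum.inr b) (XG E k (Sum.inr b))
      = util (redUtil E k ε) (Sum.inr b) (X' (Sum.inr b)) := by
    intro b hb
    rw [hX'rneg b hb, XG_inr]
  refine ⟨X', ⟨?_, ?_⟩, ?_, ?_⟩
  · -- coverage
    intro g
    cases g with
    | inl e =>
        rcases em (e.val ∈ E₁) with he₁ | he₁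
        · exact ⟨Sum.inr e.val.2, (hmemRa _ _).mpr ⟨rfl, he₁⟩⟩
        · exact ⟨Sum.inl e.val.1, (hmemLa _ _).mpr ⟨rfl, he₁⟩⟩
    | inr p =>
        rcases em (p.1 ∈ B₁) with hb | hb
        · obtain ⟨a, ha, hfa⟩ := hf_surj p.1 hb
          exact ⟨Sum.inl a, (hmemLp _ _).mpr ⟨ha, hfa.symm⟩⟩
        · exact ⟨Sum.inr p.1, (hmemRp _ _).mpr ⟨rfl, hb⟩⟩
  · -- disjointness
    intro i j hij
    rw [Finset.disjoint_left]
    intro g hgi hgj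
    apply hij
    cases g with
    | inl e =>
        cases i with
        | inl a =>
            cases j with
            | inl a' =>
                rw [hmemLa] at hgi hgj
                rw [← hgi.1, ← hgj.1]
            | inr b' =>
                rw [hmemLa] at hgi; rw [hmemRa] at hgj
                exact absurd hgj.2 hgi.2
        | inr b =>
            cases j with
            | inl a' =>
                rw [hmemRa] at hgi; rw [hmemLa] at hgj
                exact absurd hgi.2 hgj.2
            | inr b' =>
                rw [hmemRa] at hgi; rw [hmemRa] at hgj
                rw [← hgi.1, ← hgj.1]
    | inr p =>
        cases i with
        | inl a =>
            cases j with
            | inl a' =>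
                rw [hmemLp] at hgi hgj
                rw [hf_inj a hgi.1 a' hgj.1 (hgi.2 ▸ hgj.2)]
            | inr b' =>
                rw [hmemLp] at hgi; rw [hmemRp] at hgj
                exact absurd (hgj.1 ▸ hgi.2 ▸ hf_mem a hgi.1) hgj.2
        | inr b =>
            cases j with
            | inl a' =>
                rw [hmemRp] at hgi; rw [hmemLp] at hgj
                exact absurd (hgi.1 ▸ hgj.2 ▸ hf_mem a' hgj.1) hgi.2
            | inr b' =>
                rw [hmemRp] at hgi; rw [hmemRp] at hgj
                rw [← hgi.1, ← hgj.1]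
  · -- weak dominance
    intro i
    cases i with
    | inl a => exact (hUa a).le
    | inr b =>
        rcases em (b ∈ B₁) with hb | hb
        · rw [util_XG_inr, hUbs b hb]; linarith
        · rw [hUb b hb]
  · -- strict improvement
    obtain ⟨e₀, he₀⟩ := hne
    refine ⟨Sum.inr e₀.2, ?_⟩
    rw [util_XG_inr, hUbs e₀.2 (Finset.mem_image_of_mem Prod.snd he₀)]
    linarith

/- ### reverse direction -/

lemma reverse_dir (k : ℕ) (hk : 3 ≤ k) (E : Finset (A × B)) (ε : ℝ)
    (hdegA : ∀ a : A, (E.filter (fun e => e.1 = a)).card ≤ k + 1)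
    (hdegB : ∀ b : B, (E.filter (fun e => e.2 = b)).card ≤ k + 1)
    (hε0 : 0 < ε)
    (hε1 : ε < 1 / (k * (E.card + (k + 1) * Fintype.card B)))
    (X' : (A ⊕ B) → Finset (RedGood E k))
    (hAlloc : IsAllocation X')
    (hdom : ParetoDominates (redUtil E k ε) X' (XG E k)) :
    HasKRegularSubgraph E k := by
  obtain ⟨hle, j, hjlt⟩ := hdom
  have hkR : (0 : ℝ) < k := by positivity
  have hk0 : (k : ℝ) ≠ 0 := ne_of_gt hkR
  set sA : A → ℕ := fun a => (X' (Sum.inl a)).card with hsA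
  set tA : A → ℕ := fun a => ((X' (Sum.inl a)).filter (incA E k a)).card with htA
  set sB : B → ℕ := fun b => (X' (Sum.inr b)).card with hsB
  set tB : B → ℕ := fun b => ((X' (Sum.inr b)).filter (incB E k b)).card with htB
  set dA : A → ℕ := fun a => (E.filter (fun e => e.1 = a)).card with hdA
  set dB : B → ℕ := fun b => (E.filter (fun e => e.2 = b)).card with hdB
  set TA : ℕ := ∑ a : A, tA a with hTA
  set TB : ℕ := ∑ b : B, tB b with hTB
  -- total number of goods
  have hsum_s : ∑ a : A, sA a + ∑ b : B, sB b = E.card + (k + 1) * Fintype.card B := by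
    have h := sum_card_inter X' hAlloc (univ : Finset (RedGood E k))
    rw [card_univ_goods] at h
    simp only [Finset.inter_univ] at h
    rw [← h, Fintype.sum_sum_type]
  -- each bundle's incident edge goods are contained in (bundle ∩ edgeGoods)
  have hsubA : ∀ a : A, (X' (Sum.inl a)).filter (incA E k a)
      ⊆ (X' (Sum.inl a)) ∩ edgeGoods E k := by
    intro a g hg
    rw [Finset.mem_filter] at hg
    rw [Finset.mem_inter, mem_edgeGoods]
    obtain ⟨e, rfl, -⟩ := hg.2
    exact ⟨hg.1, e, rfl⟩
  have hsubB : ∀ b : B, (X' (Sum.inr b)).filter (incB E k b)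
      ⊆ (X' (Sum.inr b)) ∩ edgeGoods E k := by
    intro b g hg
    rw [Finset.mem_filter] at hg
    rw [Finset.mem_inter, mem_edgeGoods]
    obtain ⟨e, rfl, -⟩ := hg.2
    exact ⟨hg.1, e, rfl⟩
  have hsum_inter : ∑ a : A, ((X' (Sum.inl a)) ∩ edgeGoods E k).card
      + ∑ b : B, ((X' (Sum.inr b)) ∩ edgeGoods E k).card = E.card := by
    have h := sum_card_inter X' hAlloc (edgeGoods E k)
    rw [card_edgeGoods] at h
    rw [← h, Fintype.sum_sum_type]
  have hT_le : TA + TB ≤ E.card := by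
    rw [hTA, hTB, ← hsum_inter]
    apply Nat.add_le_add
    · exact Finset.sum_le_sum (fun a _ => Finset.card_le_card (hsubA a))
    · exact Finset.sum_le_sum (fun b _ => Finset.card_le_card (hsubB b))
  -- total utilities
  have hSXG : ∑ i : A ⊕ B, util (redUtil E k ε) i (XG E k i)
      = (E.card : ℝ) * (1 + 1 / k) + (Fintype.card B : ℝ) * ((k : ℝ) + 1) := by
    rw [Fintype.sum_sum_type]
    have h1 : ∀ a : A, util (redUtil E k ε) (Sum.inl a) (XG E k (Sum.inl a))
        = (dA a : ℝ) * (1 + 1 / k) := fun a => util_XG_inl E k ε a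
    have h2 : ∀ b : B, util (redUtil E k ε) (Sum.inr b) (XG E k (Sum.inr b))
        = (k : ℝ) + 1 := fun b => util_XG_inr E k ε b
    rw [Finset.sum_congr rfl (fun a _ => h1 a), Finset.sum_congr rfl (fun b _ => h2 b)]
    rw [← Finset.sum_mul, Finset.sum_const, ← Nat.cast_sum]
    rw [hdA, sum_dA E]
    simp only [Finset.card_univ, smul_eq_mul, mul_comm]
    push_cast
    ring
  have hSXp : ∑ i : A ⊕ B, util (redUtil E k ε) i (X' i)
      = ((∑ a : A, sA a + ∑ b : B, sB b : ℕ) : ℝ)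
        + (TA : ℝ) * (1 / k) + (TB : ℝ) * ((1 + ε) / k) := by
    rw [Fintype.sum_sum_type]
    rw [Finset.sum_congr rfl (fun a _ => util_inl E k ε a (X' (Sum.inl a)))]
    rw [Finset.sum_congr rfl (fun b _ => util_inr E k ε b (X' (Sum.inr b)))]
    rw [Finset.sum_add_distrib, Finset.sum_add_distrib, ← Finset.sum_mul, ← Finset.sum_mul]
    push_cast [hTA, hTB]
    ring
  -- strict global inequality
  have hstrict : ∑ i : A ⊕ B, util (redUtil E k ε) i (XG E k i)
      < ∑ i : A ⊕ B, util (redUtil E k ε) i (X' i) :=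
    Finset.sum_lt_sum (fun i _ => hle i) ⟨j, mem_univ j, hjlt⟩
  have key : (E.card : ℝ) * (1 / k) < (TA : ℝ) * (1 / k) + (TB : ℝ) * ((1 + ε) / k) := by
    rw [hSXG, hSXp, hsum_s] at hstrict
    push_cast at hstrict ⊢
    nlinarith [hstrict]
  have key2 : (E.card : ℝ) < (TA : ℝ) + ((TB : ℝ) + ε * TB) := by
    have h := mul_lt_mul_of_pos_right key hkR
    have e1 : ((E.card : ℝ) * (1 / k)) * k = E.card := by field_simp
    have e2 : ((TA : ℝ) * (1 / k) + (TB : ℝ) * ((1 + ε) / k)) * k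
        = (TA : ℝ) + ((TB : ℝ) + ε * TB) := by field_simp
    rwa [e1, e2] at h
  -- TB ≥ 1
  have hT_leR : (TA : ℝ) + (TB : ℝ) ≤ (E.card : ℝ) := by exact_mod_cast hT_le
  have hTB1 : 1 ≤ TB := by
    by_contra h
    push_neg at h
    interval_cases TB
    simp only [Nat.cast_zero, mul_zero] at key2 hT_leR
    linarith
  -- ε * TB < 1/k
  have hTBE : (TB : ℕ) ≤ E.card := le_trans (Nat.le_add_left _ _) hT_le
  have hE1 : 1 ≤ E.card := le_trans hTB1 hTBE
  have hmR : (0 : ℝ) < (E.card : ℝ) + ((k : ℝ) + 1) * (Fintype.card B : ℝ) := by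
    have : (1 : ℝ) ≤ (E.card : ℝ) := by exact_mod_cast hE1
    positivity
  have hεTB : ε * TB < 1 / k := by
    have h1 : (TB : ℝ) ≤ (E.card : ℝ) + ((k : ℝ) + 1) * (Fintype.card B : ℝ) := by
      have : (TB : ℝ) ≤ (E.card : ℝ) := by exact_mod_cast hTBE
      nlinarith [this, hkR, (Nat.cast_nonneg (Fintype.card B) : (0:ℝ) ≤ (Fintype.card B : ℝ))]
    have h2 : ε * ((E.card : ℝ) + ((k : ℝ) + 1) * (Fintype.card B : ℝ)) < 1 / k := by
      have h3 := mul_lt_mul_of_pos_right hε1 hmR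
      have e3 : 1 / ((k : ℝ) * ((E.card : ℝ) + ((k : ℝ) + 1) * (Fintype.card B : ℝ)))
          * ((E.card : ℝ) + ((k : ℝ) + 1) * (Fintype.card B : ℝ)) = 1 / k := by
        field_simp
      rwa [e3] at h3
    calc ε * TB ≤ ε * ((E.card : ℝ) + ((k : ℝ) + 1) * (Fintype.card B : ℝ)) :=
          mul_le_mul_of_nonneg_left h1 hε0.le
      _ < 1 / k := h2
  have hεTB1 : ε * TB < 1 := by
    have : 1 / (k : ℝ) ≤ 1 := by
      rw [div_le_one hkR]
      exact_mod_cast le_trans (by norm_num) hk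
    linarith
  -- TA + TB = E.card
  have hT_eq : TA + TB = E.card := by
    have h1 : (E.card : ℝ) < (TA : ℝ) + (TB : ℝ) + 1 := by linarith
    have h2 : E.card < TA + TB + 1 := by exact_mod_cast h1
    omega
  -- every bundle's edge goods are incident to its owner
  have hfeqA : ∀ a : A, (X' (Sum.inl a)).filter (incA E k a)
      = X' (Sum.inl a) ∩ edgeGoods E k := by
    have hle1 : ∑ a : A, tA a ≤ ∑ a : A, ((X' (Sum.inl a)) ∩ edgeGoods E k).card :=
      Finset.sum_le_sum (fun a _ => Finset.card_le_card (hsubA a))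
    have hle2 : ∑ b : B, tB b ≤ ∑ b : B, ((X' (Sum.inr b)) ∩ edgeGoods E k).card :=
      Finset.sum_le_sum (fun b _ => Finset.card_le_card (hsubB b))
    have heq1 : ∑ a : A, tA a = ∑ a : A, ((X' (Sum.inl a)) ∩ edgeGoods E k).card := by omega
    have := (Finset.sum_eq_sum_iff_of_le
      (fun a (_ : a ∈ univ) => Finset.card_le_card (hsubA a))).mp heq1
    intro a
    exact Finset.eq_of_subset_of_card_le (hsubA a) (le_of_eq (this a (mem_univ a)).symm)
  have hfeqB : ∀ b : B, (X' (Sum.inr b)).filter (incB E k b)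
      = X' (Sum.inr b) ∩ edgeGoods E k := by
    have hle1 : ∑ a : A, tA a ≤ ∑ a : A, ((X' (Sum.inl a)) ∩ edgeGoods E k).card :=
      Finset.sum_le_sum (fun a _ => Finset.card_le_card (hsubA a))
    have hle2 : ∑ b : B, tB b ≤ ∑ b : B, ((X' (Sum.inr b)) ∩ edgeGoods E k).card :=
      Finset.sum_le_sum (fun b _ => Finset.card_le_card (hsubB b))
    have heq2 : ∑ b : B, tB b = ∑ b : B, ((X' (Sum.inr b)) ∩ edgeGoods E k).card := by omega
    have := (Finset.sum_eq_sum_iff_of_le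
      (fun b (_ : b ∈ univ) => Finset.card_le_card (hsubB b))).mp heq2
    intro b
    exact Finset.eq_of_subset_of_card_le (hsubB b) (le_of_eq (this b (mem_univ b)).symm)
  have hstarA : ∀ (a : A) (e : {e : A × B // e ∈ E}),
      (Sum.inl e : RedGood E k) ∈ X' (Sum.inl a) → e.val.1 = a := by
    intro a e he
    have hmem : (Sum.inl e : RedGood E k) ∈ (X' (Sum.inl a)) ∩ edgeGoods E k :=
      Finset.mem_inter.mpr ⟨he, mem_edgeGoods.mpr ⟨e, rfl⟩⟩
    rw [← hfeqA a] at hmem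
    obtain ⟨-, e', heq, h⟩ := Finset.mem_filter.mp hmem
    cases Sum.inl_injective heq
    exact h
  have hstarB : ∀ (b : B) (e : {e : A × B // e ∈ E}),
      (Sum.inl e : RedGood E k) ∈ X' (Sum.inr b) → e.val.2 = b := by
    intro b e he
    have hmem : (Sum.inl e : RedGood E k) ∈ (X' (Sum.inr b)) ∩ edgeGoods E k :=
      Finset.mem_inter.mpr ⟨he, mem_edgeGoods.mpr ⟨e, rfl⟩⟩
    rw [← hfeqB b] at hmem
    obtain ⟨-, e', heq, h⟩ := Finset.mem_filter.mp hmem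
    cases Sum.inl_injective heq
    exact h
  -- the candidate subgraph
  set E₁ : Finset (A × B) := univ.filter (fun e : A × B =>
    ∃ he : e ∈ E, (Sum.inl ⟨e, he⟩ : RedGood E k) ∈ X' (Sum.inr e.2)) with hE₁def
  have hE₁mem : ∀ e : A × B, e ∈ E₁ ↔
      ∃ he : e ∈ E, (Sum.inl ⟨e, he⟩ : RedGood E k) ∈ X' (Sum.inr e.2) := by
    intro e
    rw [hE₁def, Finset.mem_filter]
    simp only [mem_univ, true_and]
  have hE₁sub : E₁ ⊆ E := by
    intro e he
    obtain ⟨h, -⟩ := (hE₁mem e).mp he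
    exact h
  -- b-fibers of E₁ have exactly tB b elements
  have hfibB : ∀ b : B, (E₁.filter (fun e => e.2 = b)).card = tB b := by
    intro b
    apply Finset.card_bij
      (fun e he => (Sum.inl ⟨e, hE₁sub (Finset.mem_of_mem_filter e he)⟩ : RedGood E k))
    · intro e he
      have he' := he
      rw [Finset.mem_filter] at he'
      obtain ⟨he₁, hb⟩ := he'
      obtain ⟨heE, hX⟩ := (hE₁mem e).mp he₁
      rw [Finset.mem_filter]
      constructor
      · subst hb
        exact hX
      · exact ⟨⟨e, heE⟩, rfl, hb⟩
    · intro e₁ h₁ e₂ h₂ heq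
      have := Sum.inl_injective heq
      exact congrArg Subtype.val this
    · intro g hg
      rw [Finset.mem_filter] at hg
      obtain ⟨hgX, e', heq, hb⟩ := hg
      subst heq
      refine ⟨e'.val, ?_, rfl⟩
      rw [Finset.mem_filter]
      refine ⟨(hE₁mem e'.val).mpr ⟨e'.2, ?_⟩, hb⟩
      rw [hb]
      exact hgX
  -- edges of a not in E₁ are exactly the edge goods held by a
  have htA_eq : ∀ a : A, (E.filter (fun e => e.1 = a ∧ e ∉ E₁)).card = tA a := by
    intro a
    apply Finset.card_bij
      (fun e he => (Sum.inl ⟨e, (Finset.mem_filter.mp he).1⟩ : RedGood E k))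
    · intro e he
      rw [Finset.mem_filter] at he
      obtain ⟨heE, ha, hne₁⟩ := he
      rw [Finset.mem_filter]
      have hin : (Sum.inl ⟨e, heE⟩ : RedGood E k) ∈ X' (Sum.inl a) := by
        obtain ⟨i, hi⟩ := hAlloc.1 (Sum.inl ⟨e, heE⟩)
        cases i with
        | inl a' =>
            have h1 := hstarA a' _ hi
            have h2 : a' = a := by rw [← h1]; exact ha
            rwa [h2] at hi
        | inr b' =>
            exfalso
            apply hne₁
            have h1 := hstarB b' _ hi
            exact (hE₁mem e).mpr ⟨heE, by rw [h1]; exact hi⟩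
      exact ⟨hin, ⟨e, heE⟩, rfl, ha⟩
    · intro e₁ h₁ e₂ h₂ heq
      have := Sum.inl_injective heq
      exact congrArg Subtype.val this
    · intro g hg
      rw [Finset.mem_filter] at hg
      obtain ⟨hgX, e', heq, ha⟩ := hg
      subst heq
      refine ⟨e'.val, Finset.mem_filter.mpr ⟨e'.2, ha, ?_⟩, rfl⟩
      intro hmem
      obtain ⟨he, hX⟩ := (hE₁mem e'.val).mp hmem
      have hd := hAlloc.2 (Sum.inl a) (Sum.inr e'.val.2) (by simp)
      exact Finset.disjoint_left.mp hd hgX hX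
  -- a-fibers of E₁
  have hfibA : ∀ a : A, (E₁.filter (fun e => e.1 = a)).card + tA a = dA a := by
    intro a
    have h1 : E₁.filter (fun e => e.1 = a)
        = (E.filter (fun e => e.1 = a)).filter (fun e => e ∈ E₁) := by
      ext e
      simp only [Finset.mem_filter]
      constructor
      · rintro ⟨h1, h2⟩; exact ⟨⟨hE₁sub h1, h2⟩, h1⟩
      · rintro ⟨⟨-, h2⟩, h3⟩; exact ⟨h3, h2⟩
    have h2 : (E.filter (fun e => e.1 = a)).filter (fun e => ¬ e ∈ E₁)
        = E.filter (fun e => e.1 = a ∧ e ∉ E₁) := by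
      rw [Finset.filter_filter]
    have h3 := Finset.card_filter_add_card_filter_not
      (s := E.filter (fun e => e.1 = a)) (fun e => e ∈ E₁)
    rw [h2, htA_eq a] at h3
    rw [h1]
    exact h3
  -- total surplus is tiny
  have hTc : (TA : ℝ) + (TB : ℝ) = (E.card : ℝ) := by exact_mod_cast hT_eq
  have hsurpl_sum : ∑ i : A ⊕ B,
      (util (redUtil E k ε) i (X' i) - util (redUtil E k ε) i (XG E k i))
      = ε * TB * (1 / k) := by
    rw [Finset.sum_sub_distrib, hSXp, hSXG, hsum_s]
    push_cast
    linear_combination (1 / (k : ℝ)) * hTc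
  have hsurpl_le : ∀ i : A ⊕ B,
      util (redUtil E k ε) i (X' i) - util (redUtil E k ε) i (XG E k i)
        ≤ ε * TB * (1 / k) := by
    intro i
    rw [← hsurpl_sum]
    exact Finset.single_le_sum (fun i _ => sub_nonneg.mpr (hle i)) (mem_univ i)
  -- per-agent integer equations
  have hAeq : ∀ a : A, k * sA a + tA a = dA a * (k + 1) := by
    intro a
    have h1 : (dA a : ℝ) * (1 + 1 / k) ≤ (sA a : ℝ) + (tA a : ℝ) * (1 / k) := by
      have h := hle (Sum.inl a)
      rwa [util_XG_inl, util_inl] at h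
    have h2 : (sA a : ℝ) + (tA a : ℝ) * (1 / k) - (dA a : ℝ) * (1 + 1 / k)
        ≤ ε * TB * (1 / k) := by
      have h := hsurpl_le (Sum.inl a)
      rwa [util_XG_inl, util_inl] at h
    have h1k : (dA a : ℝ) * k + dA a ≤ (k : ℝ) * sA a + tA a := by
      have h := mul_le_mul_of_nonneg_right h1 hkR.le
      have e1 : ((dA a : ℝ) * (1 + 1 / k)) * k = dA a * k + dA a := by field_simp
      have e2 : ((sA a : ℝ) + (tA a : ℝ) * (1 / k)) * k = (k : ℝ) * sA a + tA a := by
        field_simp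
      rwa [e1, e2] at h
    have h2k : (k : ℝ) * sA a + tA a - ((dA a : ℝ) * k + dA a) ≤ ε * TB := by
      have h := mul_le_mul_of_nonneg_right h2 hkR.le
      have e1 : ((sA a : ℝ) + (tA a : ℝ) * (1 / k) - (dA a : ℝ) * (1 + 1 / k)) * k
          = (k : ℝ) * sA a + tA a - ((dA a : ℝ) * k + dA a) := by field_simp
      have e2 : (ε * TB * (1 / k)) * k = ε * TB := by field_simp
      rwa [e1, e2] at h
    have hlow : dA a * (k + 1) ≤ k * sA a + tA a := by
      have h : ((dA a * (k + 1) : ℕ) : ℝ) ≤ ((k * sA a + tA a : ℕ) : ℝ) := by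
        push_cast; linarith
      exact_mod_cast h
    have hhigh : k * sA a + tA a < dA a * (k + 1) + 1 := by
      have h : ((k * sA a + tA a : ℕ) : ℝ) < ((dA a * (k + 1) : ℕ) : ℝ) + 1 := by
        push_cast; linarith
      exact_mod_cast h
    omega
  have hBeq : ∀ b : B, k * sB b + tB b = k * (k + 1) := by
    intro b
    have h1 : (k : ℝ) + 1 ≤ (sB b : ℝ) + (tB b : ℝ) * ((1 + ε) / k) := by
      have h := hle (Sum.inr b)
      rwa [util_XG_inr, util_inr] at h
    have h2 : (sB b : ℝ) + (tB b : ℝ) * ((1 + ε) / k) - ((k : ℝ) + 1)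
        ≤ ε * TB * (1 / k) := by
      have h := hsurpl_le (Sum.inr b)
      rwa [util_XG_inr, util_inr] at h
    have htbTB : (tB b : ℝ) ≤ (TB : ℝ) := by
      exact_mod_cast Finset.single_le_sum (f := tB) (fun i _ => Nat.zero_le _) (mem_univ b)
    have hεtb0 : 0 ≤ ε * tB b := by positivity
    have hεtb1 : ε * tB b < 1 := by
      have := mul_le_mul_of_nonneg_left htbTB hε0.le
      linarith
    have h1k : (k : ℝ) * k + k ≤ (k : ℝ) * sB b + tB b + ε * tB b := by
      have h := mul_le_mul_of_nonneg_right h1 hkR.le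
      have e1 : (((k : ℝ) + 1)) * k = (k : ℝ) * k + k := by ring
      have e2 : ((sB b : ℝ) + (tB b : ℝ) * ((1 + ε) / k)) * k
          = (k : ℝ) * sB b + tB b + ε * tB b := by field_simp; ring
      rwa [e1, e2] at h
    have h2k : (k : ℝ) * sB b + tB b + ε * tB b - ((k : ℝ) * k + k) ≤ ε * TB := by
      have h := mul_le_mul_of_nonneg_right h2 hkR.le
      have e1 : ((sB b : ℝ) + (tB b : ℝ) * ((1 + ε) / k) - ((k : ℝ) + 1)) * k
          = (k : ℝ) * sB b + tB b + ε * tB b - ((k : ℝ) * k + k) := by field_simp; ring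
      have e2 : (ε * TB * (1 / k)) * k = ε * TB := by field_simp
      rwa [e1, e2] at h
    have hlow : k * (k + 1) ≤ k * sB b + tB b := by
      have h : ((k * (k + 1) : ℕ) : ℝ) < ((k * sB b + tB b : ℕ) : ℝ) + 1 := by
        push_cast; linarith
      have h2 : k * (k + 1) < k * sB b + tB b + 1 := by exact_mod_cast h
      omega
    have hhigh : k * sB b + tB b < k * (k + 1) + 1 := by
      have h : ((k * sB b + tB b : ℕ) : ℝ) < ((k * (k + 1) : ℕ) : ℝ) + 1 := by
        push_cast; linarith
      exact_mod_cast h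
    omega
  -- bounds tA ≤ dA and tB ≤ dB
  have htBdB : ∀ b : B, tB b ≤ dB b := by
    intro b
    have hsub9 : (X' (Sum.inr b)).filter (incB E k b) ⊆ edgesOfB E k b :=
      fun g hg => mem_edgesOfB.mpr (Finset.mem_filter.mp hg).2
    calc tB b ≤ (edgesOfB E k b).card := Finset.card_le_card hsub9
      _ = dB b := card_edgesOfB E k b
  -- conclusion
  refine ⟨E₁, hE₁sub, ?_, ?_, ?_⟩
  · -- nonempty
    have hex : ∃ b : B, 0 < tB b := by
      by_contra h
      push_neg at h
      have h0 : TB = 0 := by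
        rw [hTB]
        exact Finset.sum_eq_zero (fun b _ => Nat.le_zero.mp (h b))
      omega
    obtain ⟨b, hb⟩ := hex
    obtain ⟨e, he⟩ := Finset.card_pos.mp (by rw [hfibB b]; exact hb)
    exact ⟨e, Finset.mem_of_mem_filter e he⟩
  · -- A-degrees
    intro a hne'
    have hcard := hfibA a
    have heqn := hAeq a
    have htAdA : tA a ≤ dA a := by omega
    have hdAk : dA a ≤ k + 1 := hdegA a
    have hsAdA : dA a ≤ sA a := by
      by_contra h'
      push_neg at h'
      have h6 : k * (sA a + 1) ≤ k * dA a := Nat.mul_le_mul_left k h'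
      have h6R : (k : ℝ) * sA a + k ≤ (k : ℝ) * dA a := by
        have := (Nat.cast_le (α := ℝ)).mpr h6
        push_cast at this
        linarith
      have heqnR : (k : ℝ) * sA a + tA a = (dA a : ℝ) * k + dA a := by
        have := congrArg (fun n : ℕ => (n : ℝ)) heqn
        push_cast at this
        linarith
      have htAdAR : (tA a : ℝ) ≤ dA a := by exact_mod_cast htAdA
      have hk3 : (3 : ℝ) ≤ k := by exact_mod_cast hk
      linarith
    obtain ⟨q, hq⟩ := Nat.exists_eq_add_of_le hsAdA
    have hq2 : tA a + k * q = dA a := by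
      have h7 : ((tA a : ℝ) + (k : ℝ) * q) = dA a := by
        have heqnR : (k : ℝ) * sA a + tA a = (dA a : ℝ) * k + dA a := by
          have := congrArg (fun n : ℕ => (n : ℝ)) heqn
          push_cast at this
          linarith
        have hqR : (sA a : ℝ) = dA a + q := by exact_mod_cast hq
        nlinarith [heqnR, hqR]
      exact_mod_cast h7
    have hfq : (E₁.filter (fun e => e.1 = a)).card = k * q := by
      have h8 : (E₁.filter (fun e => e.1 = a)).card + tA a = k * q + tA a := by
        rw [hcard, ← hq2]
        ring
      exact Nat.add_right_cancel h8
    have hqle : q ≤ 1 := by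
      by_contra h'
      push_neg at h'
      have h9 : k * 2 ≤ k * q := Nat.mul_le_mul_left k h'
      rw [← hfq] at h9
      omega
    interval_cases q
    · exfalso
      have := Finset.card_pos.mpr hne'
      omega
    · omega
  · -- B-degrees
    intro b hne'
    rw [hfibB b]
    have heqn := hBeq b
    have htbd : tB b ≤ k + 1 := le_trans (htBdB b) (hdegB b)
    have hsBk : sB b ≤ k + 1 := by
      by_contra h'
      push_neg at h'
      have h6 : k * (k + 2) ≤ k * sB b := Nat.mul_le_mul_left k h'
      have h6R : (k : ℝ) * (k + 2) ≤ (k : ℝ) * sB b := by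
        have := (Nat.cast_le (α := ℝ)).mpr h6
        push_cast at this
        linarith
      have heqnR : (k : ℝ) * sB b + tB b = (k : ℝ) * (k + 1) := by
        have := congrArg (fun n : ℕ => (n : ℝ)) heqn
        push_cast at this
        linarith
      have h7 : (0 : ℝ) ≤ tB b := by positivity
      have hk3 : (3 : ℝ) ≤ k := by exact_mod_cast hk
      nlinarith
    obtain ⟨q, hq⟩ := Nat.exists_eq_add_of_le hsBk
    have hq2 : tB b = k * q := by
      have h7 : k * sB b + tB b = k * sB b + k * q := by
        rw [heqn, hq]
        ring
      exact Nat.add_left_cancel h7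
    have hqle : q ≤ 1 := by
      by_contra h'
      push_neg at h'
      have h9 : k * 2 ≤ k * q := Nat.mul_le_mul_left k h'
      rw [← hq2] at h9
      omega
    interval_cases q
    · exfalso
      have := Finset.card_pos.mpr hne'
      rw [hfibB b] at this
      omega
    · omega

end AuxProof

/-- For `k ≥ 3` and a bipartite graph `G = (A ∪ B, E)` of maximum degree at
most `k+1`, `G` contains a `k`-regular bipartite subgraph iff the allocation `X_G` of the
associated personalized bi-valued instance `I_G` is Pareto-dominated by some allocation. -/
theorem kRegularSubgraph_iff_paretoDominated
    (k : ℕ) (hk : 3 ≤ k) (E : Finset (A × B)) (ε : ℝ)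
    (hdegA : ∀ a : A, (E.filter (fun e => e.1 = a)).card ≤ k + 1)
    (hdegB : ∀ b : B, (E.filter (fun e => e.2 = b)).card ≤ k + 1)
    (hε0 : 0 < ε)
    (hε1 : ε < 1 / (k * (E.card + (k + 1) * Fintype.card B))) :
    HasKRegularSubgraph E k ↔
      ∃ X' : (A ⊕ B) → Finset (RedGood E k),
        IsAllocation X' ∧ ParetoDominates (redUtil E k ε) X' (XG E k) := by
  constructor
  · intro h
    exact forward_dir k hk E ε hε0 h
  · rintro ⟨X', hAlloc, hdom⟩
    exact reverse_dir k hk E ε hdegA hdegB hε0 hε1 X' hAlloc hdom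

end
end

section
/- Let k ≥ 3 be an integer, let G = (A ∪ B, E) be a bipartite graph in which every vertex has degree at most k+1, and let I_G and X_G be the associated personalized bi-valued instance and allocation. If an allocation X' Pareto-dominates X_G, then the total utility increase Σ_{i ∈ A∪B} (u_i(X'_i) − u_i((X_G)_i)) is at most |E|·ε, which is strictly less than 1/k; in particular, every individual agent's utility increase u_i(X'_i) − u_i((X_G)_i) is strictly less than 1/k. -/
/-!
Summing utilities good by good, the welfare of any allocation is at most the sum over the goods
of the largest value any agent assigns to them. In `X_G` every filler good already reaches this
maximum, and every edge good `g_e` is held by its endpoint in `A`, who values it only `ε / k`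
below its endpoint in `B`. So the total gain of any allocation over `X_G` is at most
`|E| ε / k`, and `|E| ε < 1 / k` because `|E| ≤ m`. A Pareto-improvement has all individual
gains nonnegative, so each is bounded by the total.
-/

open Finset
open scoped Classical

noncomputable section

variable {A B : Type*} [Fintype A] [Fintype B] [DecidableEq A] [DecidableEq B]

section Allocation

variable {α β : Type*} [DecidableEq β]

theorem IsAllocation.sum_sum_eq [Fintype α] [Fintype β] {M : Type*} [AddCommMonoid M]
    {X : α → Finset β} (hX : IsAllocation X) (f : β → M) : ∑ i, ∑ g ∈ X i, f g = ∑ g, f g := by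
  rw [← sum_biUnion fun i _ j _ hij => hX.2 i j hij]
  congr
  ext g
  simpa using hX.1 g

theorem IsAllocation.sum_util_le [Fintype α] [Fintype β] {u : α → β → ℝ} {X : α → Finset β}
    (hX : IsAllocation X) {M : β → ℝ} (hM : ∀ i g, u i g ≤ M g) :
    ∑ i, util u i (X i) ≤ ∑ g, M g := by
  rw [← hX.sum_sum_eq]
  exact sum_le_sum fun i _ => sum_le_sum fun g _ => hM i g

theorem IsAllocation.sum_util_eq [Fintype α] [Fintype β] {u : α → β → ℝ} {X : α → Finset β}
    (hX : IsAllocation X) {m : β → ℝ} (hm : ∀ i, ∀ g ∈ X i, u i g = m g) :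
    ∑ i, util u i (X i) = ∑ g, m g := by
  rw [← hX.sum_sum_eq]
  exact sum_congr rfl fun i _ => sum_congr rfl (hm i)

theorem isAllocation_fibers [Fintype β] [DecidableEq α] (f : β → α) :
    IsAllocation fun i => univ.filter (f · = i) :=
  ⟨fun g => ⟨f g, by simp⟩, fun i j hij => disjoint_filter.2 fun _ _ hi hj => hij (hi ▸ hj)⟩

theorem ParetoDominates.sub_le_sum_sub [Fintype α] {u : α → β → ℝ} {X' X : α → Finset β}
    (h : ParetoDominates u X' X) (i : α) :
    util u i (X' i) - util u i (X i) ≤ ∑ j, (util u j (X' j) - util u j (X j)) :=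
  single_le_sum (fun j _ => sub_nonneg.2 (h.1 j)) (mem_univ i)

end Allocation

theorem mul_lt_one_div_of_lt_one_div_mul {n m k ε : ℝ} (hk : 0 ≤ k) (hnm : n ≤ m)
    (hε : 0 < ε) (h : ε < 1 / (k * m)) : n * ε < 1 / k := by
  have hkm : 0 < k * m := one_div_pos.1 (hε.trans h)
  have hk' : 0 < k := hk.lt_of_ne fun hk0 => by simp [← hk0] at hkm
  rw [lt_div_iff₀ hkm] at h
  rw [lt_div_iff₀ hk']
  calc n * ε * k ≤ m * ε * k := by gcongr
    _ = ε * (k * m) := by ring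
    _ < 1 := h

def xgOwner (E : Finset (A × B)) (k : ℕ) : RedGood E k → A ⊕ B
  | Sum.inl e => Sum.inl e.val.1
  | Sum.inr p => Sum.inr p.1

omit [Fintype A] in
theorem XG_eq_filter_xgOwner (E : Finset (A × B)) (k : ℕ) (i : A ⊕ B) :
    XG E k i = univ.filter (xgOwner E k · = i) := by
  rcases i with a | b <;> ext (e | p) <;>
    simp only [XG, mem_filter, mem_univ, true_and] <;> simp [xgOwner, Prod.ext_iff]

omit [Fintype A] in
theorem isAllocation_XG (E : Finset (A × B)) (k : ℕ) : IsAllocation (XG E k) := by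
  rw [funext (XG_eq_filter_xgOwner E k)]
  exact isAllocation_fibers (xgOwner E k)

/-- The largest value any agent of `I_G` assigns to a good. -/
def redMaxUtil (E : Finset (A × B)) (k : ℕ) (ε : ℝ) : RedGood E k → ℝ :=
  Sum.elim (fun _ => 1 + (1 + ε) / k) fun _ => 1

omit [Fintype A] [Fintype B] in
theorem redUtil_le_redMaxUtil (E : Finset (A × B)) (k : ℕ) {ε : ℝ} (hε : 0 ≤ ε)
    (i : A ⊕ B) (g : RedGood E k) : redUtil E k ε i g ≤ redMaxUtil E k ε g := by
  have h1 : 1 / (k : ℝ) ≤ (1 + ε) / k := by gcongr; linarith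
  have h0 : 0 ≤ 1 / (k : ℝ) := by positivity
  rcases i with a | b <;> rcases g with e | p <;>
    simp only [redUtil, redMaxUtil, Sum.elim_inl, Sum.elim_inr, le_refl] <;>
    split_ifs <;> linarith

omit [Fintype A] in
theorem sum_redMaxUtil_sub_redUtil_xgOwner (E : Finset (A × B)) (k : ℕ) (ε : ℝ) :
    ∑ g, (redMaxUtil E k ε g - redUtil E k ε (xgOwner E k g) g) = E.card * (ε / k) := by
  simp only [Fintype.sum_sum_type, redMaxUtil, xgOwner, redUtil, Sum.elim_inl, Sum.elim_inr,
    if_true, sub_self, sum_const, card_univ, Fintype.card_coe, nsmul_eq_mul]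
  ring

theorem sum_gain_over_XG_le (E : Finset (A × B)) (k : ℕ) {ε : ℝ} (hε : 0 ≤ ε)
    {X' : A ⊕ B → Finset (RedGood E k)} (hX' : IsAllocation X') :
    ∑ i, (util (redUtil E k ε) i (X' i) - util (redUtil E k ε) i (XG E k i)) ≤
      E.card * (ε / k) := by
  have hXG : ∀ i, ∀ g ∈ XG E k i, redUtil E k ε i g = redUtil E k ε (xgOwner E k g) g := by
    intro i g hg
    rw [XG_eq_filter_xgOwner, mem_filter] at hg
    rw [hg.2]
  rw [sum_sub_distrib, ← sum_redMaxUtil_sub_redUtil_xgOwner, sum_sub_distrib,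
    (isAllocation_XG E k).sum_util_eq hXG]
  exact sub_le_sub_right (hX'.sum_util_le (redUtil_le_redMaxUtil E k hε)) _

theorem paretoImprovement_small_gain_general
    (k : ℕ) (E : Finset (A × B)) (ε : ℝ)
    (hε0 : 0 < ε)
    (hε1 : ε < 1 / (k * (E.card + (k + 1) * Fintype.card B)))
    (X' : (A ⊕ B) → Finset (RedGood E k)) (hX' : IsAllocation X')
    (hdom : ParetoDominates (redUtil E k ε) X' (XG E k)) :
    (∑ i : A ⊕ B,
        (util (redUtil E k ε) i (X' i) - util (redUtil E k ε) i (XG E k i))) ≤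
          (E.card : ℝ) * ε ∧
      (E.card : ℝ) * ε < 1 / (k : ℝ) ∧
      ∀ i : A ⊕ B,
        util (redUtil E k ε) i (X' i) - util (redUtil E k ε) i (XG E k i) < 1 / (k : ℝ) := by
  have htotal : ∑ i, (util (redUtil E k ε) i (X' i) - util (redUtil E k ε) i (XG E k i)) ≤
      E.card * ε :=
    (sum_gain_over_XG_le E k hε0.le hX').trans <|
      mul_le_mul_of_nonneg_left (div_nat_le_self_of_nonnneg hε0.le k) E.card.cast_nonneg
  have hsmall : (E.card : ℝ) * ε < 1 / k :=
    mul_lt_one_div_of_lt_one_div_mul k.cast_nonneg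
      (le_add_of_nonneg_right (by positivity)) hε0 hε1
  exact ⟨htotal, hsmall, fun i => ((hdom.sub_le_sum_sub i).trans htotal).trans_lt hsmall⟩

/-- If an allocation `X'` Pareto-dominates `X_G`, then the total utility
increase is at most `|E|·ε`, which is strictly less than `1/k`; in particular every
individual agent's utility increase is strictly less than `1/k`. -/
theorem paretoImprovement_small_gain
    (k : ℕ) (hk : 3 ≤ k) (E : Finset (A × B)) (ε : ℝ)
    (hdegA : ∀ a : A, (E.filter (fun e => e.1 = a)).card ≤ k + 1)
    (hdegB : ∀ b : B, (E.filter (fun e => e.2 = b)).card ≤ k + 1)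
    (hε0 : 0 < ε)
    (hε1 : ε < 1 / (k * (E.card + (k + 1) * Fintype.card B)))
    (X' : (A ⊕ B) → Finset (RedGood E k)) (hX' : IsAllocation X')
    (hdom : ParetoDominates (redUtil E k ε) X' (XG E k)) :
    (∑ i : A ⊕ B,
        (util (redUtil E k ε) i (X' i) - util (redUtil E k ε) i (XG E k i))) ≤
          (E.card : ℝ) * ε ∧
      (E.card : ℝ) * ε < 1 / (k : ℝ) ∧
      ∀ i : A ⊕ B,
        util (redUtil E k ε) i (X' i) - util (redUtil E k ε) i (XG E k i) < 1 / (k : ℝ) :=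
  paretoImprovement_small_gain_general k E ε hε0 hε1 X' hX' hdom

end
end
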